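/- arXiv:1503.08401 — 6 statements merged into one kernel-verified Lean document; each statement's English description precedes it below -/
import Mathlib

section
/- Let U be a two-dimensional complex subspace of ℂ⁴ with basis {u₁,u₂} such that det(u₁ | j u₁ | u₂ | j u₂) = 0. Then U is invariant under j, i.e. j(U) = U. -/
/-- The conjugate-linear map `j` on `ℂ⁴`. -/
noncomputable def j4 (v : Fin 4 → ℂ) : Fin 4 → ℂ :=
  ![-(starRingEnd ℂ) (v 1), (starRingEnd ℂ) (v 0), -(starRingEnd ℂ) (v 3), (starRingEnd ℂ) (v 2)]

lemma j4_add (v w : Fin 4 → ℂ) : j4 (v + w) = j4 v + j4 w := by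
  funext i; fin_cases i <;> simp [j4] <;> ring

lemma j4_smul (a : ℂ) (v : Fin 4 → ℂ) : j4 (a • v) = (starRingEnd ℂ a) • j4 v := by
  funext i; fin_cases i <;> simp [j4] <;> ring

lemma j4_neg (v : Fin 4 → ℂ) : j4 (-v) = -(j4 v) := by
  funext i; fin_cases i <;> simp [j4]

lemma j4_j4 (v : Fin 4 → ℂ) : j4 (j4 v) = -v := by
  funext i; fin_cases i <;> simp [j4]

lemma j4_zero : j4 0 = 0 := by
  funext i; fin_cases i <;> simp [j4]

lemma j4_no_eigen {v : Fin 4 → ℂ} {c : ℂ} (h : j4 v = c • v) : v = 0 := by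
  have h2 : -v = (starRingEnd ℂ c * c) • v := by
    have := congrArg j4 h
    rw [j4_j4, j4_smul, h, smul_smul] at this
    exact this
  have h3 : (starRingEnd ℂ c * c + 1) • v = 0 := by
    rw [add_smul, one_smul, ← h2]; simp
  have h4 : starRingEnd ℂ c * c + 1 ≠ 0 := by
    have : starRingEnd ℂ c * c = (Complex.normSq c : ℂ) := by
      rw [mul_comm, Complex.mul_conj]
    rw [this]
    rw [show ((Complex.normSq c : ℂ) + 1) = ((Complex.normSq c + 1 : ℝ) : ℂ) by push_cast; ring]
    rw [Complex.ofReal_ne_zero]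
    have := Complex.normSq_nonneg c
    nlinarith [Complex.normSq_nonneg c]
  exact (smul_eq_zero.mp h3).resolve_left h4

/-- If `U` is a 2-dimensional complex subspace of `ℂ⁴` with basis `{u₁,u₂}` such that
`det(u₁ | j u₁ | u₂ | j u₂) = 0`, then `U` is invariant under `j`: `j(U) = U`. -/
theorem j4_invariant_of_det_zero (U : Submodule ℂ (Fin 4 → ℂ)) (u₁ u₂ : Fin 4 → ℂ)
    (hrank : Module.finrank ℂ U = 2)
    (hind : LinearIndependent ℂ ![u₁, u₂])
    (hspan : Submodule.span ℂ {u₁, u₂} = U)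
    (hdet : (Matrix.of fun i k => ![u₁, j4 u₁, u₂, j4 u₂] k i).det = 0) :
    j4 '' (U : Set (Fin 4 → ℂ)) = (U : Set (Fin 4 → ℂ)) := by
  have hu₁ : u₁ ∈ U := hspan ▸ Submodule.subset_span (by simp)
  have hu₂ : u₂ ∈ U := hspan ▸ Submodule.subset_span (by simp)
  -- independence in functional form
  have hindf : ∀ s t : ℂ, s • u₁ + t • u₂ = 0 → s = 0 ∧ t = 0 := by
    intro s t hst
    have := Fintype.linearIndependent_iff.mp hind ![s, t] (by
      simpa [Fin.sum_univ_two] using hst)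
    exact ⟨this 0, this 1⟩
  -- get a linear dependence from det = 0
  obtain ⟨c, hc0, hmv⟩ := Matrix.exists_mulVec_eq_zero_iff.mpr hdet
  set a := c 0 with ha'
  set b := c 1 with hb'
  set p := c 2 with hp'
  set q := c 3 with hq'
  have hrel : a • u₁ + b • j4 u₁ + p • u₂ + q • j4 u₂ = 0 := by
    funext i
    have := congrFun hmv i
    simp [Matrix.mulVec, dotProduct, Fin.sum_univ_four] at this
    simp only [Pi.add_apply, Pi.smul_apply, Pi.zero_apply, smul_eq_mul]
    linear_combination this
  have hbq : ¬ (b = 0 ∧ q = 0) := by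
    rintro ⟨hb, hq⟩
    rw [hb, hq] at hrel
    simp only [zero_smul, add_zero] at hrel
    obtain ⟨ha0, hp0⟩ := hindf a p hrel
    apply hc0
    funext k; fin_cases k <;> simpa [← ha', ← hb', ← hp', ← hq']
  -- second relation from applying j4
  have hrel2 : (starRingEnd ℂ a) • j4 u₁ - (starRingEnd ℂ b) • u₁
      + (starRingEnd ℂ p) • j4 u₂ - (starRingEnd ℂ q) • u₂ = 0 := by
    have := congrArg j4 hrel
    rw [j4_add, j4_add, j4_add, j4_smul, j4_smul, j4_smul, j4_smul, j4_j4, j4_j4, j4_zero]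
      at this
    linear_combination (norm := module) this
  set δ := b * starRingEnd ℂ p - q * starRingEnd ℂ a with hδ'
  have key : j4 u₁ ∈ U ∧ j4 u₂ ∈ U := by
    by_cases hδ : δ = 0
    · -- degenerate case: contradiction with independence / no eigenvector
      exfalso
      obtain ⟨lam, hla, hlp⟩ : ∃ lam : ℂ, a = lam * starRingEnd ℂ b ∧ p = lam * starRingEnd ℂ q := by
        rw [hδ', sub_eq_zero] at hδ
        by_cases hb : b = 0
        · have hq : q ≠ 0 := fun h => hbq ⟨hb, h⟩
          have hcq : starRingEnd ℂ q ≠ 0 := by simpa using hq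
          refine ⟨p / starRingEnd ℂ q, ?_, ?_⟩
          · 
            have : q * starRingEnd ℂ a = 0 := by rw [← hδ, hb, zero_mul]
            have ha0 : a = 0 := by
              have := (mul_eq_zero.mp this).resolve_left hq
              simpa using congrArg (starRingEnd ℂ) this
            rw [ha0, hb]; simp
          · field_simp
        · have hcb : starRingEnd ℂ b ≠ 0 := by simpa using hb
          refine ⟨a / starRingEnd ℂ b, by field_simp, ?_⟩
          field_simp
          have := congrArg (starRingEnd ℂ) hδ
          simp only [map_mul, Complex.conj_conj] at this
          linear_combination this
      set w := (starRingEnd ℂ b) • u₁ + (starRingEnd ℂ q) • u₂ with hw'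
      have hjw : j4 w = (-lam) • w := by
        rw [hw', j4_add, j4_smul, j4_smul, Complex.conj_conj, Complex.conj_conj]
        rw [hla, hlp] at hrel
        linear_combination (norm := module) hrel
      have hw0 : w = 0 := j4_no_eigen hjw
      obtain ⟨h1, h2⟩ := hindf _ _ (hw' ▸ hw0)
      exact hbq ⟨by simpa using congrArg (starRingEnd ℂ) h1,
        by simpa using congrArg (starRingEnd ℂ) h2⟩
    · -- nondegenerate: solve the 2×2 system
      have hP : b • j4 u₁ + q • j4 u₂ ∈ U := by
        have : b • j4 u₁ + q • j4 u₂ = -(a • u₁) - p • u₂ := by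
          linear_combination (norm := module) hrel
        rw [this]
        exact U.sub_mem (U.neg_mem (U.smul_mem _ hu₁)) (U.smul_mem _ hu₂)
      have hQ : (starRingEnd ℂ a) • j4 u₁ + (starRingEnd ℂ p) • j4 u₂ ∈ U := by
        have : (starRingEnd ℂ a) • j4 u₁ + (starRingEnd ℂ p) • j4 u₂
            = (starRingEnd ℂ b) • u₁ + (starRingEnd ℂ q) • u₂ := by
          linear_combination (norm := module) hrel2
        rw [this]
        exact U.add_mem (U.smul_mem _ hu₁) (U.smul_mem _ hu₂)
      constructor
      · have h1 : j4 u₁ = δ⁻¹ • ((starRingEnd ℂ p) • (b • j4 u₁ + q • j4 u₂)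
            - q • ((starRingEnd ℂ a) • j4 u₁ + (starRingEnd ℂ p) • j4 u₂)) := by
          match_scalars <;> field_simp <;> ring
        rw [h1]
        exact U.smul_mem _ (U.sub_mem (U.smul_mem _ hP) (U.smul_mem _ hQ))
      · have h2 : j4 u₂ = δ⁻¹ • (b • ((starRingEnd ℂ a) • j4 u₁ + (starRingEnd ℂ p) • j4 u₂)
            - (starRingEnd ℂ a) • (b • j4 u₁ + q • j4 u₂)) := by
          match_scalars <;> field_simp <;> ring
        rw [h2]
        exact U.smul_mem _ (U.sub_mem (U.smul_mem _ hQ) (U.smul_mem _ hP))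
  obtain ⟨hj1, hj2⟩ := key
  have hjU : ∀ y ∈ U, j4 y ∈ U := by
    intro y hy
    rw [← hspan, Submodule.mem_span_pair] at hy
    obtain ⟨s, t, rfl⟩ := hy
    rw [j4_add, j4_smul, j4_smul]
    exact U.add_mem (U.smul_mem _ hj1) (U.smul_mem _ hj2)
  ext x
  constructor
  · rintro ⟨y, hy, rfl⟩
    exact hjU y hy
  · intro hx
    exact ⟨-(j4 x), U.neg_mem (hjU x hx), by rw [j4_neg, j4_j4, neg_neg]⟩
end

section
/- On m = ℂⁿ ⊕ iℝ (with a, b ∈ iℝ interpreted as imaginary numbers), let su(n) act by B·(z,a) = (Bz, 0). Then the seven bilinear maps α₁((z,a),(w,b)) = (bz, 0), α_i((z,a),(w,b)) = (ibz, 0), β₁((z,a),(w,b)) = (aw, 0), β_i((z,a),(w,b)) = (iaw, 0), γ₁((z,a),(w,b)) = (0, i·Im(conj(z)ᵗw)), γ_i((z,a),(w,b)) = (0, i·Re(conj(z)ᵗw)), δ((z,a),(w,b)) = (0, i·a·b) are each su(n)-invariant, i.e. B·α(x,y) = α(B·x, y) + α(x, B·y) for all B ∈ su(n) and all x, y ∈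 m, for each α among these seven maps. -/
open Complex

/-- The reductive complement `m = ℂⁿ ⊕ iℝ`, modelled as pairs `(z, a)` with `z ∈ ℂⁿ` and
`a` a complex number (required to be purely imaginary in the statements). -/
abbrev mSpace (n : ℕ) := (Fin n → ℂ) × ℂ

/-- The action of `su(n)` on `m`: `B·(z,a) = (Bz, 0)`. -/
noncomputable def mAct {n : ℕ} (B : Matrix (Fin n) (Fin n) ℂ) (x : mSpace n) : mSpace n :=
  (B.mulVec x.1, 0)

/-- The Hermitian pairing `conj(z)ᵗ w`. -/
noncomputable def hermC {n : ℕ} (z w : Fin n → ℂ) : ℂ := ∑ l, (starRingEnd ℂ) (z l) * w l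

def mapA1 {n : ℕ} (x y : mSpace n) : mSpace n := (y.2 • x.1, 0)
noncomputable def mapAi {n : ℕ} (x y : mSpace n) : mSpace n := ((Complex.I * y.2) • x.1, 0)
def mapB1 {n : ℕ} (x y : mSpace n) : mSpace n := (x.2 • y.1, 0)
noncomputable def mapBi {n : ℕ} (x y : mSpace n) : mSpace n := ((Complex.I * x.2) • y.1, 0)
noncomputable def mapG1 {n : ℕ} (x y : mSpace n) : mSpace n :=
  (0, Complex.I * ((hermC x.1 y.1).im : ℂ))
noncomputable def mapGi {n : ℕ} (x y : mSpace n) : mSpace n :=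
  (0, Complex.I * ((hermC x.1 y.1).re : ℂ))
noncomputable def mapD1 {n : ℕ} (x y : mSpace n) : mSpace n := (0, Complex.I * x.2 * y.2)

lemma hermC_skew {n : ℕ} (B : Matrix (Fin n) (Fin n) ℂ) (hB : B.conjTranspose = -B)
    (z w : Fin n → ℂ) : hermC (B.mulVec z) w + hermC z (B.mulVec w) = 0 := by
  have key : hermC (B.mulVec z) w = hermC z (B.conjTranspose.mulVec w) := by
    simp only [hermC, Matrix.mulVec, dotProduct, Matrix.conjTranspose_apply, map_sum,
      map_mul, Finset.mul_sum, Finset.sum_mul]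
    rw [Finset.sum_comm]
    apply Finset.sum_congr rfl; intro l _
    apply Finset.sum_congr rfl; intro k _
    simp [RingHom.id_apply]
    ring
  rw [key, hB, Matrix.neg_mulVec]
  simp [hermC, Finset.sum_neg_distrib, ← Finset.sum_add_distrib]

/-- The seven bilinear maps `α₁, α_i, β₁, β_i, γ₁, γ_i, δ` on `m = ℂⁿ ⊕ iℝ` are each
invariant under the action of `su(n)`: `B·α(x,y) = α(B·x, y) + α(x, B·y)`. -/
theorem seven_maps_su_invariant (n : ℕ) (B : Matrix (Fin n) (Fin n) ℂ)
    (hB : B.conjTranspose = -B) (htr : B.trace = 0)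
    (x y : mSpace n) (hx : x.2.re = 0) (hy : y.2.re = 0) :
    mAct B (mapA1 x y) = mapA1 (mAct B x) y + mapA1 x (mAct B y) ∧
    mAct B (mapAi x y) = mapAi (mAct B x) y + mapAi x (mAct B y) ∧
    mAct B (mapB1 x y) = mapB1 (mAct B x) y + mapB1 x (mAct B y) ∧
    mAct B (mapBi x y) = mapBi (mAct B x) y + mapBi x (mAct B y) ∧
    mAct B (mapG1 x y) = mapG1 (mAct B x) y + mapG1 x (mAct B y) ∧
    mAct B (mapGi x y) = mapGi (mAct B x) y + mapGi x (mAct B y) ∧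
    mAct B (mapD1 x y) = mapD1 (mAct B x) y + mapD1 x (mAct B y) := by
  have hskew := hermC_skew B hB x.1 y.1
  have him : (hermC (B.mulVec x.1) y.1).im + (hermC x.1 (B.mulVec y.1)).im = 0 := by
    have := congrArg Complex.im hskew; simpa using this
  have hre : (hermC (B.mulVec x.1) y.1).re + (hermC x.1 (B.mulVec y.1)).re = 0 := by
    have := congrArg Complex.re hskew; simpa using this
  refine ⟨?_, ?_, ?_, ?_, ?_, ?_, ?_⟩
  · simp [mAct, mapA1, Prod.ext_iff, Matrix.mulVec_smul]
  · simp [mAct, mapAi, Prod.ext_iff, Matrix.mulVec_smul]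
  · simp [mAct, mapB1, Prod.ext_iff, Matrix.mulVec_smul]
  · simp [mAct, mapBi, Prod.ext_iff, Matrix.mulVec_smul]
  · simp only [mAct, mapG1, Prod.mk_add_mk, Prod.ext_iff]
    constructor
    · simp
    · rw [← mul_add, ← Complex.ofReal_add, him]
      simp [Matrix.mulVec_zero]
  · simp only [mAct, mapGi, Prod.mk_add_mk, Prod.ext_iff]
    constructor
    · simp
    · rw [← mul_add, ← Complex.ofReal_add, hre]
      simp [Matrix.mulVec_zero]
  · simp [mAct, mapD1, Prod.ext_iff]
end

section
/- Let g be the inner product on m = ℂⁿ ⊕ iℝ given by g((z,a),(w,b)) = Re(zᵗ conj(w)) − ab (a,b purely imaginary, so −ab ∈ ℝ), and let α₁, α_i, β₁, γ₁, γ_i be the bilinear maps on m defined by α₁((z,a),(w,b)) = (bz,0), α_i((z,a),(w,b)) = (ibz,0), β₁((z,a),(w,b)) = (aw,0), γ₁((z,a),(w,b)) = (0, i Im(conj(z)ᵗw)), γ_i((z,a),(w,b)) = (0, i Re(conj(z)ᵗw)); then for q ∈ ℂ and t ∈ ℝ the bilinear map α = Re(q)(α₁ − γ₁) + Im(q)(α_i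 + γ_i) + t β₁ satisfies g(α(c,a), b) + g(a, α(c,b)) = 0 for all a,b,c ∈ m. -/
open Complex

/-- The inner product `g((z,a),(w,b)) = Re(zᵗ conj(w)) − ab` on `m = ℂⁿ ⊕ iℝ`
(here `a b` is real since `a, b` are purely imaginary). -/
noncomputable def gm {n : ℕ} (x y : mSpace n) : ℝ :=
  (∑ l, x.1 l * (starRingEnd ℂ) (y.1 l)).re - (x.2 * y.2).re

/-- The bilinear map `α = Re(q)(α₁ − γ₁) + Im(q)(α_i + γ_i) + t β₁`. -/
noncomputable def alphaMetric {n : ℕ} (q : ℂ) (t : ℝ) (x y : mSpace n) : mSpace n :=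
  ((q.re : ℂ)) • (mapA1 x y - mapG1 x y) + ((q.im : ℂ)) • (mapAi x y + mapGi x y)
    + ((t : ℂ)) • mapB1 x y

/-- The bilinear map `α = Re(q)(α₁ − γ₁) + Im(q)(α_i + γ_i) + t β₁` satisfies the metric
compatibility condition `g(α(c,a), b) + g(a, α(c,b)) = 0` for all `a, b, c ∈ m`. -/
theorem alphaMetric_skew_adjoint (n : ℕ) (q : ℂ) (t : ℝ)
    (a b c : mSpace n) (ha : a.2.re = 0) (hb : b.2.re = 0) (hc : c.2.re = 0) :
    gm (alphaMetric q t c a) b + gm a (alphaMetric q t c b) = 0 := by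
  obtain ⟨za, xa⟩ := a
  obtain ⟨zb, xb⟩ := b
  obtain ⟨zc, xc⟩ := c
  simp only [gm, alphaMetric, mapA1, mapAi, mapB1, mapG1, mapGi, hermC] at *
  simp only [Prod.fst_add, Prod.snd_add, Prod.fst_sub, Prod.snd_sub, Prod.smul_fst,
    Prod.smul_snd, Pi.add_apply, Pi.sub_apply, Pi.smul_apply, smul_eq_mul, Prod.mk_add_mk,
    Prod.mk_sub_mk, Prod.smul_mk, zero_add, add_zero, sub_zero, zero_sub, mul_zero,
    smul_zero]
  simp only [Complex.re_sum, Complex.im_sum, Complex.add_re, Complex.add_im, Complex.mul_re,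
    Complex.mul_im, Complex.neg_re, Complex.neg_im, Complex.ofReal_re, Complex.ofReal_im,
    Complex.I_re, Complex.I_im, Complex.conj_re, Complex.conj_im, ha, hb, hc,
    mul_zero, zero_mul, sub_zero, zero_sub, add_zero, zero_add, mul_one, one_mul, mul_neg,
    neg_mul, neg_neg, neg_zero, Finset.mul_sum, Finset.sum_neg_distrib]
  simp only [Finset.sum_const_zero, add_zero, zero_add, neg_neg, Finset.sum_mul,
    Finset.mul_sum, neg_add, ← Finset.sum_neg_distrib, ← Finset.sum_add_distrib,
    ← Finset.sum_sub_distrib]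
  apply Finset.sum_eq_zero
  intro l _
  ring
end

section
/- Let m = ℂⁿ ⊕ iℝ, and let α_g = α₁ − γ₁ − (1/n)β₁ be the map corresponding to the Levi-Civita connection and α = Re(q)(α₁−γ₁) + Im(q)(α_i+γ_i) + tβ₁. Then the difference map D = α_g − α is skew-symmetric (D(x,y) = −D(y,x) for all x,y ∈ m) if and only if Im(q) = 0 and Re(q) = 1 − t − 1/n. -/
/-- `α_g = α₁ − γ₁ − (1/n)β₁`, corresponding to the Levi-Civita connection. -/
noncomputable def alphaLC {n : ℕ} (x y : mSpace n) : mSpace n :=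
  mapA1 x y - mapG1 x y - ((n : ℂ))⁻¹ • mapB1 x y

lemma hermC_swap {n : ℕ} (z w : Fin n → ℂ) : hermC w z = (starRingEnd ℂ) (hermC z w) := by
  simp [hermC, map_sum, mul_comm]

/-- The difference map `D = α_g − α` is skew-symmetric on `m` if and only if
`Im(q) = 0` and `Re(q) = 1 − t − 1/n`. -/
theorem difference_skew_iff (n : ℕ) (hn : 1 ≤ n) (q : ℂ) (t : ℝ) :
    (∀ x y : mSpace n, x.2.re = 0 → y.2.re = 0 →
        alphaLC x y - alphaMetric q t x y = -(alphaLC y x - alphaMetric q t y x))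
      ↔ (q.im = 0 ∧ q.re = 1 - t - (n : ℝ)⁻¹) := by
  constructor
  · intro h
    have h0 := h (fun _ => 0, Complex.I) (fun _ => 1, 0) (by simp) (by simp)
    have h2 := congrFun (congrArg Prod.fst h0) ⟨0, hn⟩
    simp [alphaLC, alphaMetric, mapA1, mapAi, mapB1, mapG1, mapGi, hermC] at h2
    have h3 : (1 : ℂ) - (q.re : ℂ) - q.im * Complex.I - (n:ℂ)⁻¹ - t = 0 := by
      have h3' : ((1 : ℂ) - (q.re : ℂ) - q.im * Complex.I - (n:ℂ)⁻¹ - t) * Complex.I = 0 := by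
        linear_combination h2 - q.im * Complex.I_sq
      exact (mul_eq_zero.mp h3').resolve_right Complex.I_ne_zero
    constructor
    · have := congrArg Complex.im h3
      simpa using this
    · have := congrArg Complex.re h3
      simp at this
      linarith
  · rintro ⟨hi, hr⟩
    intro x y _ _
    have hs : hermC y.1 x.1 = (starRingEnd ℂ) (hermC x.1 y.1) := hermC_swap x.1 y.1
    have hre : (hermC y.1 x.1).re = (hermC x.1 y.1).re := by rw [hs]; simp
    have him : (hermC y.1 x.1).im = -(hermC x.1 y.1).im := by rw [hs]; simp
    ext i
    · simp [alphaLC, alphaMetric, mapA1, mapAi, mapB1, mapG1, mapGi, hi, hr]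
      ring
    · simp [alphaLC, alphaMetric, mapA1, mapAi, mapB1, mapG1, mapGi, hi, hr, hre, him]
      ring
end

section
/- In the reductive decomposition su(n+1) = su(n) ⊕ m with m = {((−a/n)Iₙ, z; −conj(z)ᵗ, a) : z ∈ ℂⁿ, a ∈ iℝ}, the m-component of the bracket of two elements of m identified with (z,a),(w,b) ∈ ℂⁿ ⊕ iℝ is [(z,a),(w,b)]_m = (((n+1)/n)(bz − aw), conj(w)ᵗz − conj(z)ᵗw). -/
/-- The matrix in `su(n+1)` corresponding to `(z, a) ∈ m = ℂⁿ ⊕ iℝ`: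
the block matrix `[[−(a/n)Iₙ, z],[−conj(z)ᵗ, a]]`. -/
noncomputable def embM (n : ℕ) (z : Fin n → ℂ) (a : ℂ) :
    Matrix (Fin n ⊕ Fin 1) (Fin n ⊕ Fin 1) ℂ :=
  Matrix.fromBlocks ((-(a / (n : ℂ))) • (1 : Matrix (Fin n) (Fin n) ℂ))
    (Matrix.of fun i _ => z i)
    (Matrix.of fun _ k => -(starRingEnd ℂ) (z k))
    (Matrix.of fun _ _ => a)

/-- The `m`-component of the bracket of two elements of `m`:
`[(z,a),(w,b)]_m = (((n+1)/n)(bz − aw), conj(w)ᵗz − conj(z)ᵗw)`. Concretely,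
the last column (above the diagonal) of the commutator is `((n+1)/n)(bz − aw)` and its
bottom-right entry is `conj(w)ᵗz − conj(z)ᵗw`. -/
theorem bracket_m_component (n : ℕ) (hn : 1 ≤ n) (z w : Fin n → ℂ) (a b : ℂ)
    (ha : a.re = 0) (hb : b.re = 0) :
    (∀ i : Fin n,
      (embM n z a * embM n w b - embM n w b * embM n z a) (Sum.inl i) (Sum.inr 0)
        = ((n : ℂ) + 1) / (n : ℂ) * (b * z i - a * w i)) ∧
    (embM n z a * embM n w b - embM n w b * embM n z a) (Sum.inr 0) (Sum.inr 0)
      = (∑ l, (starRingEnd ℂ) (w l) * z l) - ∑ l, (starRingEnd ℂ) (z l) * w l := by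
  have hn0 : (n : ℂ) ≠ 0 := Nat.cast_ne_zero.mpr (by omega)
  constructor
  · intro i
    simp [embM, Matrix.sub_apply, Matrix.mul_apply, Fintype.sum_sum_type,
      Matrix.fromBlocks, Matrix.one_apply, Finset.mul_sum, Finset.sum_ite_eq,
      Fin.sum_univ_one]
    field_simp
    ring
  · simp [embM, Matrix.sub_apply, Matrix.mul_apply, Fintype.sum_sum_type,
      Matrix.fromBlocks, Fin.sum_univ_one]
    ring
end

section
/- Let a = i s, b = i t ∈ iℝ and z, w ∈ ℂⁿ, and define the torsion map T((z,a),(w,b)) = ((q − t₀ − (n+1)/n)(bz − aw), (Re(q) − 1)(conj(w)ᵗz − conj(z)ᵗw)) arising from α = Re(q)(α₁−γ₁)+Im(q)(α_i+γ_i)+t₀β₁ via T(x,y) = α(x,y) − α(y,x) − [x,y]_m. Then T vanishes identically if and only if q = 1 and t₀ = −1/n. -/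
/-- The torsion map
`T((z,a),(w,b)) = ((q − t₀ − (n+1)/n)(bz − aw), (Re(q) − 1)(conj(w)ᵗz − conj(z)ᵗw))`. -/
noncomputable def torsionMap (n : ℕ) (q : ℂ) (t₀ : ℝ) (x y : mSpace n) : mSpace n :=
  ((q - (t₀ : ℂ) - ((n : ℂ) + 1) / (n : ℂ)) • (y.2 • x.1 - x.2 • y.1),
    (q.re - 1 : ℂ) *
      ((∑ l, (starRingEnd ℂ) (y.1 l) * x.1 l) - ∑ l, (starRingEnd ℂ) (x.1 l) * y.1 l))

/-! `T` vanishes exactly when both of its scalar coefficients do. Pairing `((1,…,1), 0)` with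
`(0, i)` isolates the first, `q − t₀ − (n+1)/n`, and pairing it with `((i,…,i), 0)` isolates the
second, `Re q − 1`. The first being zero forces `q` to be real, so `q = 1` and
`t₀ = 1 − (n+1)/n = −1/n`. -/

section

variable {n : ℕ} {q : ℂ} {t₀ : ℝ}

theorem torsionMap_eq_zero (hc : q - t₀ - ((n : ℂ) + 1) / n = 0) (hre : q.re = 1)
    (x y : mSpace n) : torsionMap n q t₀ x y = 0 := by
  simp [torsionMap, hc, hre]

theorem torsionMap_fst_one_zero_zero_I (i : Fin n) :
    (torsionMap n q t₀ (fun _ => 1, 0) (0, Complex.I)).1 i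
      = (q - t₀ - ((n : ℂ) + 1) / n) * Complex.I := by
  simp [torsionMap]

theorem torsionMap_snd_one_zero_I_zero :
    (torsionMap n q t₀ (fun _ => 1, 0) (fun _ => Complex.I, 0)).2
      = -(2 * n * Complex.I) * (q.re - 1) := by
  simp only [torsionMap, zero_smul, sub_self, smul_zero, Complex.conj_I, mul_one,
    Finset.sum_neg_distrib, Finset.sum_const, Finset.card_univ, Fintype.card_fin, nsmul_eq_mul,
    map_one, one_mul]
  ring

theorem torsionMap_vanishes_iff [NeZero n] :
    (∀ x y : mSpace n, x.2.re = 0 → y.2.re = 0 → torsionMap n q t₀ x y = 0)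
      ↔ q - t₀ - ((n : ℂ) + 1) / n = 0 ∧ q.re = 1 := by
  refine ⟨fun h => ⟨?_, ?_⟩, fun ⟨hc, hre⟩ x y _ _ => torsionMap_eq_zero hc hre x y⟩
  · have h1 := congrFun (congrArg Prod.fst (h (fun _ => 1, 0) (0, Complex.I) rfl rfl)) 0
    rw [torsionMap_fst_one_zero_zero_I] at h1
    simpa using h1
  · have h2 := congrArg Prod.snd (h (fun _ => 1, 0) (fun _ => Complex.I, 0) rfl rfl)
    rw [torsionMap_snd_one_zero_I_zero] at h2
    have hn : (n : ℂ) ≠ 0 := NeZero.ne _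
    have h2' : (q.re : ℂ) - 1 = 0 := by simpa [hn, Complex.I_ne_zero] using h2
    exact_mod_cast sub_eq_zero.mp h2'

theorem torsion_coeffs_vanish_iff (hn : n ≠ 0) :
    q - t₀ - ((n : ℂ) + 1) / n = 0 ∧ q.re = 1 ↔ q = 1 ∧ t₀ = -(n : ℝ)⁻¹ := by
  have hn' : (n : ℂ) ≠ 0 := Nat.cast_ne_zero.mpr hn
  constructor
  · rintro ⟨hc, hre⟩
    have hq : q = 1 := by
      refine Complex.ext hre ?_
      simpa [Complex.div_im] using congrArg Complex.im hc
    refine ⟨hq, ?_⟩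
    subst hq
    have ht : (t₀ : ℂ) = ((-(n : ℝ)⁻¹ : ℝ) : ℂ) := by
      push_cast
      field_simp at hc ⊢
      linear_combination -hc
    exact Complex.ofReal_injective ht
  · rintro ⟨rfl, rfl⟩
    refine ⟨?_, rfl⟩
    push_cast
    field_simp
    ring

end

/-- The torsion `T` vanishes identically on `m` if and only if `q = 1` and `t₀ = −1/n`. -/
theorem torsion_vanishes_iff (n : ℕ) (hn : 1 ≤ n) (q : ℂ) (t₀ : ℝ) :
    (∀ x y : mSpace n, x.2.re = 0 → y.2.re = 0 → torsionMap n q t₀ x y = 0)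
      ↔ (q = 1 ∧ t₀ = -(n : ℝ)⁻¹) := by
  have : NeZero n := ⟨by omega⟩
  rw [torsionMap_vanishes_iff, torsion_coeffs_vanish_iff (NeZero.ne n)]
end
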